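/- arXiv:1312.2411 — 2 statements merged into one kernel-verified Lean document; each statement's English description precedes it below -/
import Mathlib

section
/- Define M₆ : ℝ⁶ → ℝ⁶ as the composition M ∘ Q restricted via the formula, and let y ∈ ℝ⁶ have nonnegative entries with y₁+y₂+y₃ > 0 and y₄+y₅+y₆ > 0. Set u = (y₁+y₄, y₂+y₅, y₃+y₆) and v = (y₁+y₂+y₃, y₄+y₅+y₆). Then applying T(y) = M(Q(y)) and forming the corresponding sums, one gets T(y)₁+T(y)₄ proportional to 2(y₁+y₄)(y₁+⋯+y₆), T(y)₂+T(y)₅ proportional to 2(y₂+y₅)(y₁+⋯+y₆), and T(y)₃+T(y)₆ proportional to 2(y₃+y₆)(y₁+⋯+y₆); in particular the normalized allele-group marginals (u₁,u₂,u₃)/(u₁+u₂+u₃) are invariant under T. -/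
noncomputable def M : Matrix (Fin 6) (Fin 18) ℝ :=
  !![4,2,0,2,0,0,2,1,0,1,0,0,0,0,0,0,0,0;
     0,2,4,0,0,2,0,1,2,0,0,1,0,0,0,0,0,0;
     0,0,0,2,4,2,0,0,0,1,2,1,0,0,0,0,0,0;
     0,0,0,0,0,0,2,1,0,1,0,0,4,2,0,2,0,0;
     0,0,0,0,0,0,0,1,2,0,0,1,0,2,4,0,0,2;
     0,0,0,0,0,0,0,0,0,1,2,1,0,0,0,2,4,2]

noncomputable def Qmap (y : Fin 6 → ℝ) : Fin 18 → ℝ :=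
  ![y 0 ^ 2, 2 * y 0 * y 1, y 1 ^ 2, 2 * y 0 * y 2, y 2 ^ 2, 2 * y 1 * y 2,
    2 * y 0 * y 3, 2 * y 0 * y 4 + 2 * y 1 * y 3, 2 * y 1 * y 4,
    2 * y 0 * y 5 + 2 * y 2 * y 3, 2 * y 2 * y 5, 2 * y 1 * y 5 + 2 * y 2 * y 4,
    y 3 ^ 2, 2 * y 3 * y 4, y 4 ^ 2, 2 * y 3 * y 5, y 5 ^ 2, 2 * y 4 * y 5]

noncomputable def f (x : Fin 18 → ℝ) : Fin 18 → ℝ := Qmap (M.mulVec x)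

/-! Adding rows `i` and `i + 3` of `M` and evaluating against `Q y` gives `4 s uᵢ`, where
`uᵢ = y i + y (i + 3)` and `s = ∑ y`: the three allele marginals are scaled by the same
factor `4 s`, which cancels on normalizing. -/

lemma mulVec_Qmap_allele_marginals (y : Fin 6 → ℝ) :
    let T := M.mulVec (Qmap y)
    let s := y 0 + y 1 + y 2 + y 3 + y 4 + y 5
    T 0 + T 3 = 4 * s * (y 0 + y 3) ∧ T 1 + T 4 = 4 * s * (y 1 + y 4) ∧
      T 2 + T 5 = 4 * s * (y 2 + y 5) := by
  simp only [Matrix.mulVec, dotProduct, M, Fin.isValue, Matrix.of_apply, Matrix.cons_val',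
    Matrix.cons_val_fin_one, Matrix.cons_val_zero, Qmap, Fin.sum_univ_succ, Matrix.cons_val_succ,
    zero_mul, one_mul, Finset.univ_unique, Fin.default_eq_zero, Finset.sum_const_zero, add_zero,
    zero_add, Matrix.cons_val, Matrix.cons_val_one, Finset.sum_const, Finset.card_singleton,
    one_smul]
  refine ⟨?_, ?_, ?_⟩ <;> ring

theorem blood_group_marginals_invariant_general (y : Fin 6 → ℝ)
    (h1 : 0 < y 0 + y 1 + y 2) (h2 : 0 < y 3 + y 4 + y 5) :
    let T := M.mulVec (Qmap y)
    let s := y 0 + y 1 + y 2 + y 3 + y 4 + y 5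
    (∃ t : ℝ, 0 < t ∧
        T 0 + T 3 = t * (2 * (y 0 + y 3) * s) ∧
        T 1 + T 4 = t * (2 * (y 1 + y 4) * s) ∧
        T 2 + T 5 = t * (2 * (y 2 + y 5) * s)) ∧
      (T 0 + T 3) / ((T 0 + T 3) + (T 1 + T 4) + (T 2 + T 5)) = (y 0 + y 3) / s ∧
      (T 1 + T 4) / ((T 0 + T 3) + (T 1 + T 4) + (T 2 + T 5)) = (y 1 + y 4) / s ∧
      (T 2 + T 5) / ((T 0 + T 3) + (T 1 + T 4) + (T 2 + T 5)) = (y 2 + y 5) / s := by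
  intro T s
  have hs : 0 < 4 * s := by dsimp only [s]; linarith
  obtain ⟨e0, e1, e2⟩ := mulVec_Qmap_allele_marginals y
  have htotal : (T 0 + T 3) + (T 1 + T 4) + (T 2 + T 5) = 4 * s * s := by
    rw [e0, e1, e2]; ring
  refine ⟨⟨2, two_pos, by rw [e0]; ring, by rw [e1]; ring, by rw [e2]; ring⟩, ?_, ?_, ?_⟩
  · rw [htotal, e0, mul_div_mul_left _ _ hs.ne']
  · rw [htotal, e1, mul_div_mul_left _ _ hs.ne']
  · rw [htotal, e2, mul_div_mul_left _ _ hs.ne']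

/-- The blood-group allele marginals y₁+y₄, y₂+y₅, y₃+y₆ are preserved, up to a
common positive scalar, by one generation T = M ∘ Q of the dynamics; in
particular the normalized marginals are invariant. -/
theorem blood_group_marginals_invariant (y : Fin 6 → ℝ) (hy : ∀ i, 0 ≤ y i)
    (h1 : 0 < y 0 + y 1 + y 2) (h2 : 0 < y 3 + y 4 + y 5) :
    let T := M.mulVec (Qmap y)
    let s := y 0 + y 1 + y 2 + y 3 + y 4 + y 5
    (∃ t : ℝ, 0 < t ∧
        T 0 + T 3 = t * (2 * (y 0 + y 3) * s) ∧
        T 1 + T 4 = t * (2 * (y 1 + y 4) * s) ∧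
        T 2 + T 5 = t * (2 * (y 2 + y 5) * s)) ∧
      (T 0 + T 3) / ((T 0 + T 3) + (T 1 + T 4) + (T 2 + T 5)) = (y 0 + y 3) / s ∧
      (T 1 + T 4) / ((T 0 + T 3) + (T 1 + T 4) + (T 2 + T 5)) = (y 1 + y 4) / s ∧
      (T 2 + T 5) / ((T 0 + T 3) + (T 1 + T 4) + (T 2 + T 5)) = (y 2 + y 5) / s :=
  blood_group_marginals_invariant_general y h1 h2
end

section
/- Let R(x,n) denote the right-hand side of the closed-form evolution formula (the 6-tuple built from M₁(x),…,M₆(x) with coefficients 2^{n-1}) composed with Q. Then R(x,1) is proportional to f(x) for every x ∈ ℝ¹⁸ with nonnegative entries not all zero, where f is the 18-component quadratic system of the paper. -/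
open Matrix

/-- The paper's `z(x, n)` is `closedFormVector n (M *ᵥ x)`, with `Mₖ = m (k - 1)`. -/
def closedFormVector {R : Type*} [CommRing R] (n : ℕ) (m : Fin 6 → R) : Fin 6 → R :=
  ![m 0 * (m 4 + m 5) - m 3 * (m 1 + m 2) + (2:R)^(n-1) * (m 0 + m 3) * (m 0 + m 1 + m 2),
    m 1 * (m 3 + m 5) - m 4 * (m 0 + m 2) + (2:R)^(n-1) * (m 1 + m 4) * (m 0 + m 1 + m 2),
    m 2 * (m 3 + m 4) - m 5 * (m 0 + m 1) + (2:R)^(n-1) * (m 2 + m 5) * (m 0 + m 1 + m 2),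
    m 3 * (m 1 + m 2) - m 0 * (m 4 + m 5) + (2:R)^(n-1) * (m 0 + m 3) * (m 3 + m 4 + m 5),
    m 4 * (m 0 + m 2) - m 1 * (m 3 + m 5) + (2:R)^(n-1) * (m 1 + m 4) * (m 3 + m 4 + m 5),
    m 5 * (m 0 + m 1) - m 2 * (m 3 + m 4) + (2:R)^(n-1) * (m 2 + m 5) * (m 3 + m 4 + m 5)]

theorem closedFormVector_one {R : Type*} [CommRing R] (m : Fin 6 → R) :
    closedFormVector 1 m = (∑ i, m i) • m := by
  ext i
  fin_cases i <;>
    simp only [closedFormVector, Fin.sum_univ_six, Pi.smul_apply, smul_eq_mul, Fin.zero_eta,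
      Fin.mk_one, Fin.reduceFinMk, cons_val_zero, cons_val_one, cons_val] <;> ring

theorem Qmap_smul (c : ℝ) (y : Fin 6 → ℝ) : Qmap (c • y) = c ^ 2 • Qmap y := by
  ext i
  fin_cases i <;>
    simp only [Qmap, Pi.smul_apply, smul_eq_mul, Fin.zero_eta, Fin.mk_one, Fin.reduceFinMk,
      cons_val_zero, cons_val_one, cons_val] <;> ring

theorem Matrix.sum_mulVec_of_sum_col_eq {m n R : Type*} [Fintype m] [Fintype n] [CommSemiring R]
    {A : Matrix m n R} {c : R} (hA : ∀ j, ∑ i, A i j = c) (x : n → R) :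
    ∑ i, (A *ᵥ x) i = c * ∑ j, x j := by
  simp only [mulVec, dotProduct, Finset.mul_sum]
  rw [Finset.sum_comm]
  simp [← Finset.sum_mul, hA]

theorem sum_M_col (j : Fin 18) : ∑ i, M i j = 4 := by
  fin_cases j <;> simp [M, Fin.sum_univ_six] <;> norm_num

/-- The right-hand side R(x,1) of the closed-form evolution formula is
proportional to f(x). -/
theorem closed_form_at_one (x : Fin 18 → ℝ) (hx : ∀ i, 0 ≤ x i) (hne : x ≠ 0) :
    let M₁ := M.mulVec x 0
    let M₂ := M.mulVec x 1
    let M₃ := M.mulVec x 2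
    let M₄ := M.mulVec x 3
    let M₅ := M.mulVec x 4
    let M₆ := M.mulVec x 5
    let z : Fin 6 → ℝ :=
      ![M₁ * (M₅ + M₆) - M₄ * (M₂ + M₃) + (2:ℝ)^(1-1) * (M₁ + M₄) * (M₁ + M₂ + M₃),
        M₂ * (M₄ + M₆) - M₅ * (M₁ + M₃) + (2:ℝ)^(1-1) * (M₂ + M₅) * (M₁ + M₂ + M₃),
        M₃ * (M₄ + M₅) - M₆ * (M₁ + M₂) + (2:ℝ)^(1-1) * (M₃ + M₆) * (M₁ + M₂ + M₃),
        M₄ * (M₂ + M₃) - M₁ * (M₅ + M₆) + (2:ℝ)^(1-1) * (M₁ + M₄) * (M₄ + M₅ + M₆),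
        M₅ * (M₁ + M₃) - M₂ * (M₄ + M₆) + (2:ℝ)^(1-1) * (M₂ + M₅) * (M₄ + M₅ + M₆),
        M₆ * (M₁ + M₂) - M₃ * (M₄ + M₅) + (2:ℝ)^(1-1) * (M₃ + M₆) * (M₄ + M₅ + M₆)]
    ∃ t : ℝ, 0 < t ∧ Qmap z = t • f x := by
  show ∃ t : ℝ, 0 < t ∧ Qmap (closedFormVector 1 (M *ᵥ x)) = t • f x
  have hsum : 0 < ∑ j, x j := Fintype.sum_pos (lt_of_le_of_ne hx (Ne.symm hne))
  refine ⟨(4 * ∑ j, x j) ^ 2, by positivity, ?_⟩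
  rw [closedFormVector_one, Matrix.sum_mulVec_of_sum_col_eq sum_M_col, Qmap_smul, f]
end
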